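/- arXiv:2503.10548 — 9 statements merged into one kernel-verified Lean document; each statement's English description precedes it below -/
import Mathlib

section
/- Let m, n ≥ 3 and let G be the cartesian product of the directed cycles of lengths n and m, i.e. the digraph on ZMod n × ZMod m with arcs (i, j) → (i + 1, j) and (i, j) → (i, j + 1). Then the following are equivalent: (i) G is a dextro-nut digraph; (ii) G is a laevo-nut digraph; (iii) G is an ambi-nut digraph; (iv) m·n is even and gcd(m, n) = 1. -/
open Matrix Finset
open scoped Classical

variable {V : Type*} [Fintype V] [DecidableEq V]
variable {W : Type*} [Fintype W] [DecidableEq W]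

/-- Adjacency matrix of a digraph `G` on `V`. -/
noncomputable def adjMat (G : V → V → Prop) : Matrix V V ℝ :=
  Matrix.of fun u v => if G u v then (1 : ℝ) else 0

/-- The kernel of a digraph. -/
def KerD (G : V → V → Prop) : Set (V → ℝ) := {x | (adjMat G).mulVec x = 0}

/-- The cokernel of a digraph. -/
def CoKerD (G : V → V → Prop) : Set (V → ℝ) := {x | (adjMat G)ᵀ.mulVec x = 0}

/-- A vector is full if it has no zero entries. -/
def Full (x : V → ℝ) : Prop := ∀ v, x v ≠ 0

/-- Dextro-nut digraph: the kernel is one-dimensional, spanned by a full vector. -/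
def IsDextroNut (G : V → V → Prop) : Prop :=
  ∃ x ∈ KerD G, Full x ∧ ∀ y ∈ KerD G, ∃ c : ℝ, y = c • x

/-- Laevo-nut digraph: the cokernel is one-dimensional, spanned by a full vector. -/
def IsLaevoNut (G : V → V → Prop) : Prop :=
  ∃ x ∈ CoKerD G, Full x ∧ ∀ y ∈ CoKerD G, ∃ c : ℝ, y = c • x

/-- Bi-nut digraph: both dextro-nut and laevo-nut. -/
def IsBiNut (G : V → V → Prop) : Prop := IsDextroNut G ∧ IsLaevoNut G

/-- Ambi-nut digraph: one full vector spans both kernel and cokernel. -/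
def IsAmbiNut (G : V → V → Prop) : Prop :=
  ∃ x : V → ℝ, Full x ∧ x ∈ KerD G ∧ x ∈ CoKerD G ∧
    (∀ y ∈ KerD G, ∃ c : ℝ, y = c • x) ∧ (∀ y ∈ CoKerD G, ∃ c : ℝ, y = c • x)

/-- Inter-nut digraph: the intersection of kernel and cokernel is one-dimensional,
spanned by a full vector. -/
def IsInterNut (G : V → V → Prop) : Prop :=
  ∃ x : V → ℝ, Full x ∧ x ∈ KerD G ∩ CoKerD G ∧
    ∀ y ∈ KerD G ∩ CoKerD G, ∃ c : ℝ, y = c • x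

/-- Nullity of a digraph: dimension of the kernel of its adjacency matrix. -/
noncomputable def nullityD (G : V → V → Prop) : ℕ :=
  Module.finrank ℝ (LinearMap.ker (adjMat G).mulVecLin)

/-- The digraph obtained by deleting vertex `v`. -/
def delV (G : V → V → Prop) (v : V) : {u : V // u ≠ v} → {u : V // u ≠ v} → Prop :=
  fun a b => G a.1 b.1

def torus (n m : ℕ) : (ZMod n × ZMod m) → (ZMod n × ZMod m) → Prop :=
  fun p q => (q.1 = p.1 + 1 ∧ q.2 = p.2) ∨ (q.1 = p.1 ∧ q.2 = p.2 + 1)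


/-!
Out of `p` there are arcs to `p + (1, 0)` and `p + (0, 1)` only, so `x` lies in the kernel iff
`x (q + d) = -x q` for `d = (1, -1)`, and the cokernel is the same space. Such an antiperiodic
function is determined by its values at coset representatives of the cyclic group generated by
`d`, and vanishes unless `d` has even order. Hence the kernel is spanned by a full vector iff `d`
generates `ZMod n × ZMod m` and has even order, i.e. iff `lcm n m = n * m` is even.
-/

open Function

theorem antiperiodic_sub_iff_forall_add_add_eq_zero {α β : Type*} [AddCommGroup α] [AddGroup β]
    {f : α → β} {a b : α} : Antiperiodic f (a - b) ↔ ∀ p, f (p + a) + f (p + b) = 0 := by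
  refine ⟨fun h p => ?_, fun h q => eq_neg_of_add_eq_zero_left ?_⟩
  · have hp := h (p + b)
    rw [add_add_sub_cancel] at hp
    rw [hp, neg_add_cancel]
  · simpa only [sub_add_eq_add_sub, add_sub_assoc, sub_self, add_zero] using h (q - b)

theorem antiperiodic_sub_iff_forall_sub_add_sub_eq_zero {α β : Type*} [AddCommGroup α]
    [AddCommGroup β] {f : α → β} {a b : α} :
    Antiperiodic f (a - b) ↔ ∀ p, f (p - a) + f (p - b) = 0 := by
  rw [antiperiodic_sub_iff_forall_add_add_eq_zero]
  refine ⟨fun h p => ?_, fun h p => ?_⟩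
  · rw [add_comm, ← h (p - a - b), sub_add_cancel, sub_right_comm, sub_add_cancel]
  · rw [← h (p + a + b), add_sub_cancel_right, add_right_comm, add_sub_cancel_right, add_comm]

section Antiperiodic

variable {α : Type*} [AddGroup α]

theorem Function.Antiperiodic.indicator_zmultiples {β : Type*} [NegZeroClass β] {f : α → β}
    {c : α} (hf : Antiperiodic f c) :
    Antiperiodic ((AddSubgroup.zmultiples c : Set α).indicator f) c := by
  intro a
  by_cases ha : a ∈ AddSubgroup.zmultiples c
  · rw [Set.indicator_of_mem ha, Set.indicator_of_mem (add_mem ha (AddSubgroup.mem_zmultiples c)),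
      hf]
  · have ha' : a + c ∉ AddSubgroup.zmultiples c := fun h =>
      ha (by simpa using sub_mem h (AddSubgroup.mem_zmultiples c))
    rw [Set.indicator_of_notMem ha, Set.indicator_of_notMem ha', neg_zero]

variable {K : Type*} [Field K] [CharZero K]

theorem Function.Antiperiodic.eq_zero_of_odd_addOrderOf {f : α → K} {c : α}
    (hf : Antiperiodic f c) (hc : Odd (addOrderOf c)) : f = 0 := by
  funext a
  have h := hf.add_nsmul_eq (x := a) (addOrderOf c)
  rw [addOrderOf_nsmul_eq_zero, add_zero, hc.neg_one_pow, neg_one_smul] at h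
  exact CharZero.eq_neg_self_iff.mp h

theorem exists_zsmul_eq_negOnePow {c : α} (hc : AddSubgroup.zmultiples c = ⊤)
    (heven : Even (addOrderOf c)) : ∃ s : α → ℤˣ, ∀ k : ℤ, s (k • c) = k.negOnePow := by
  choose idx hidx using fun a => AddSubgroup.mem_zmultiples_iff.mp (hc ▸ AddSubgroup.mem_top a)
  refine ⟨fun a => (idx a).negOnePow, fun k => (Int.negOnePow_eq_iff _ _).mpr ?_⟩
  have hdvd : (addOrderOf c : ℤ) ∣ idx (k • c) - k := by
    rw [addOrderOf_dvd_iff_zsmul_eq_zero, sub_zsmul, hidx, add_neg_cancel]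
  exact (heven.natCast (α := ℤ)).trans_dvd hdvd

theorem exists_full_antiperiodic_spanning_iff (c : α) :
    (∃ x : α → K, Antiperiodic x c ∧ (∀ a, x a ≠ 0) ∧
        ∀ y : α → K, Antiperiodic y c → ∃ r : K, y = r • x) ↔
      Even (addOrderOf c) ∧ AddSubgroup.zmultiples c = ⊤ := by
  constructor
  · rintro ⟨x, hx, hfull, hspan⟩
    refine ⟨Nat.not_odd_iff_even.mp fun hodd => hfull 0 ?_, ?_⟩
    · rw [hx.eq_zero_of_odd_addOrderOf hodd, Pi.zero_apply]
    -- otherwise the restriction of `x` to the subgroup generated by `c` is not a multiple of `x`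
    rw [AddSubgroup.eq_top_iff']
    intro a
    by_contra ha
    obtain ⟨r, hr⟩ := hspan _ hx.indicator_zmultiples
    have h0 := congrFun hr 0
    have ha' := congrFun hr a
    rw [Set.indicator_of_mem (zero_mem _), Pi.smul_apply, smul_eq_mul] at h0
    rw [Set.indicator_of_notMem ha, Pi.smul_apply, smul_eq_mul] at ha'
    have hr1 : r = 1 := (mul_eq_right₀ (hfull 0)).mp h0.symm
    rw [hr1, one_mul] at ha'
    exact hfull a ha'.symm
  · rintro ⟨heven, hc⟩
    obtain ⟨s, hs⟩ := exists_zsmul_eq_negOnePow hc heven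
    have hmem : ∀ a, ∃ k : ℤ, k • c = a := fun a =>
      AddSubgroup.mem_zmultiples_iff.mp (hc ▸ AddSubgroup.mem_top a)
    set x : α → K := fun a => ((s a : ℤ) : K)
    have hx : ∀ k : ℤ, x (k • c) = (k.negOnePow : ℤ) := fun k => by simp only [x, hs]
    refine ⟨x, fun a => ?_, fun a => ?_, fun y hy => ⟨y 0, funext fun a => ?_⟩⟩
    · obtain ⟨k, rfl⟩ := hmem a
      rw [← add_one_zsmul, hx, hx, Int.negOnePow_succ, Units.val_neg, Int.cast_neg]
    · obtain ⟨k, rfl⟩ := hmem a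
      rw [hx]
      exact Int.cast_ne_zero.mpr k.negOnePow.ne_zero
    · obtain ⟨k, rfl⟩ := hmem a
      have hk := hy.add_zsmul_eq (x := 0) k
      rw [zero_add] at hk
      rw [hk, Pi.smul_apply, hx, smul_eq_mul, zsmul_eq_mul, mul_comm]

end Antiperiodic

section Digraph

omit [DecidableEq V]

variable {G : V → V → Prop}

theorem mem_kerD_iff {x : V → ℝ} : x ∈ KerD G ↔ ∀ v, ∑ u with G v u, x u = 0 := by
  simp [KerD, adjMat, funext_iff, mulVec, dotProduct, Finset.sum_filter]

theorem mem_coKerD_iff {x : V → ℝ} : x ∈ CoKerD G ↔ ∀ v, ∑ u with G u v, x u = 0 := by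
  simp [CoKerD, adjMat, funext_iff, mulVec, dotProduct, Finset.sum_filter]

theorem isDextroNut_iff_isLaevoNut_of_kerD_eq_coKerD (h : KerD G = CoKerD G) :
    IsDextroNut G ↔ IsLaevoNut G := by
  rw [IsDextroNut, IsLaevoNut, h]

theorem isDextroNut_iff_isAmbiNut_of_kerD_eq_coKerD (h : KerD G = CoKerD G) :
    IsDextroNut G ↔ IsAmbiNut G := by
  constructor
  · rintro ⟨x, hx, hfull, hspan⟩
    exact ⟨x, hfull, hx, h ▸ hx, hspan, h ▸ hspan⟩
  · rintro ⟨x, hfull, hx, -, hspan, -⟩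
    exact ⟨x, hx, hfull, hspan⟩

end Digraph

section Torus

variable {n m : ℕ}

theorem torus_iff {p q : ZMod n × ZMod m} : torus n m p q ↔ q = p + (1, 0) ∨ q = p + (0, 1) := by
  simp [torus, Prod.ext_iff]

theorem filter_torus_eq_pair [NeZero n] [NeZero m] (p : ZMod n × ZMod m) :
    univ.filter (torus n m p) = {p + (1, 0), p + (0, 1)} := by
  ext q
  simp [torus_iff]

theorem filter_flip_torus_eq_pair [NeZero n] [NeZero m] (p : ZMod n × ZMod m) :
    univ.filter (torus n m · p) = {p - (1, 0), p - (0, 1)} := by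
  ext q
  simp [torus_iff, eq_sub_iff_add_eq, eq_comm]

theorem one_neg_one_eq_sub : ((1, -1) : ZMod n × ZMod m) = (1, 0) - (0, 1) := by
  rw [Prod.mk_sub_mk, sub_zero, zero_sub]

theorem addOrderOf_one_neg_one : addOrderOf ((1, -1) : ZMod n × ZMod m) = Nat.lcm n m := by
  rw [Prod.addOrderOf_mk, addOrderOf_neg, ZMod.addOrderOf_one, ZMod.addOrderOf_one]

theorem zmultiples_one_neg_one_eq_top_iff [NeZero n] [NeZero m] :
    AddSubgroup.zmultiples ((1, -1) : ZMod n × ZMod m) = ⊤ ↔ Nat.Coprime n m := by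
  rw [← AddSubgroup.card_eq_iff_eq_top, Nat.card_zmultiples, addOrderOf_one_neg_one, Nat.card_prod,
    Nat.card_zmod, Nat.card_zmod, Nat.lcm_eq_mul_iff, or_iff_right (NeZero.ne n),
    or_iff_right (NeZero.ne m), Nat.Coprime]

variable [Fact (1 < n)]

theorem one_zero_ne_zero_one : ((1, 0) : ZMod n × ZMod m) ≠ (0, 1) :=
  fun h => one_ne_zero (congrArg Prod.fst h)

theorem mem_kerD_torus_iff [NeZero m] {x : ZMod n × ZMod m → ℝ} :
    x ∈ KerD (torus n m) ↔ Antiperiodic x (1, -1) := by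
  rw [one_neg_one_eq_sub, antiperiodic_sub_iff_forall_add_add_eq_zero, mem_kerD_iff]
  simp only [filter_torus_eq_pair, sum_pair ((add_right_injective _).ne one_zero_ne_zero_one)]

theorem mem_coKerD_torus_iff [NeZero m] {x : ZMod n × ZMod m → ℝ} :
    x ∈ CoKerD (torus n m) ↔ Antiperiodic x (1, -1) := by
  rw [one_neg_one_eq_sub, antiperiodic_sub_iff_forall_sub_add_sub_eq_zero, mem_coKerD_iff]
  simp only [filter_flip_torus_eq_pair, sum_pair (sub_right_injective.ne one_zero_ne_zero_one)]

theorem kerD_torus_eq_coKerD [NeZero m] : KerD (torus n m) = CoKerD (torus n m) :=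
  Set.ext fun _ => mem_kerD_torus_iff.trans mem_coKerD_torus_iff.symm

theorem isDextroNut_torus_iff [NeZero m] :
    IsDextroNut (torus n m) ↔ Even (Nat.lcm n m) ∧ Nat.Coprime n m := by
  rw [← addOrderOf_one_neg_one (m := m), ← zmultiples_one_neg_one_eq_top_iff,
    ← exists_full_antiperiodic_spanning_iff (K := ℝ)]
  simp only [IsDextroNut, Full, mem_kerD_torus_iff]

end Torus

theorem stmt1_general (n m : ℕ) [NeZero n] [NeZero m] (hn : 3 ≤ n) :
    (IsDextroNut (torus n m) ↔ IsLaevoNut (torus n m)) ∧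
    (IsDextroNut (torus n m) ↔ IsAmbiNut (torus n m)) ∧
    (IsDextroNut (torus n m) ↔ (2 ∣ m * n ∧ Nat.gcd m n = 1)) := by
  have : Fact (1 < n) := ⟨by omega⟩
  refine ⟨isDextroNut_iff_isLaevoNut_of_kerD_eq_coKerD kerD_torus_eq_coKerD,
    isDextroNut_iff_isAmbiNut_of_kerD_eq_coKerD kerD_torus_eq_coKerD, ?_⟩
  rw [isDextroNut_torus_iff, Nat.coprime_comm, Nat.Coprime, mul_comm, ← even_iff_two_dvd]
  exact and_congr_left fun hcop => by rw [Nat.Coprime.lcm_eq_mul (Nat.coprime_comm.mp hcop)]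

theorem stmt1 (n m : ℕ) [NeZero n] [NeZero m] (hn : 3 ≤ n) (hm : 3 ≤ m) :
    (IsDextroNut (torus n m) ↔ IsLaevoNut (torus n m)) ∧
    (IsDextroNut (torus n m) ↔ IsAmbiNut (torus n m)) ∧
    (IsDextroNut (torus n m) ↔ (2 ∣ m * n ∧ Nat.gcd m n = 1)) :=
  stmt1_general n m hn
end

section
/- Let G be a digraph on a finite vertex type V and let w ∈ V. (1) If y : V → ℝ satisfies Σ_{u with v → u} y u = 0 for every vertex v ≠ w, and there exists x ∈ CoKer G with x w ≠ 0, then also Σ_{u with w → u} y u = 0, so y ∈ Ker G. (2) Symmetrically, if y satisfies Σ_{u with u → v} y u = 0 for every v ≠ w, and there exists x ∈ Ker G with x w ≠ 0, then Σ_{u with u → w} y u = 0, so y ∈ CoKer G. -/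
open Matrix Finset
open scoped Classical

variable {V : Type*} [Fintype V] [DecidableEq V]
variable {W : Type*} [Fintype W] [DecidableEq W]

lemma key_aux (M : Matrix V V ℝ) (y x : V → ℝ) (w : V)
    (hy : ∀ v, v ≠ w → M.mulVec y v = 0) (hx : Mᵀ.mulVec x = 0) (hxw : x w ≠ 0) :
    M.mulVec y = 0 := by
  have h : x ⬝ᵥ M.mulVec y = Mᵀ.mulVec x ⬝ᵥ y := by
    rw [Matrix.dotProduct_mulVec, ← Matrix.mulVec_transpose]
  rw [hx, zero_dotProduct] at h
  have h2 : ∑ v, x v * M.mulVec y v = x w * M.mulVec y w := by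
    apply Finset.sum_eq_single
    · intro v _ hv; rw [hy v hv, mul_zero]
    · intro hw; exact absurd (Finset.mem_univ w) hw
  rw [dotProduct, h2] at h
  have hw0 : M.mulVec y w = 0 := by
    rcases mul_eq_zero.mp h with h' | h'
    · exact absurd h' hxw
    · exact h'
  funext v
  by_cases hv : v = w
  · rw [hv]; exact hw0
  · exact hy v hv

lemma mulVec_adj (G : V → V → Prop) (y : V → ℝ) (v : V) :
    (adjMat G).mulVec y v = ∑ u ∈ Finset.univ.filter (fun u => G v u), y u := by
  simp [adjMat, Matrix.mulVec, dotProduct, ite_mul, Finset.sum_filter]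

lemma mulVecT_adj (G : V → V → Prop) (y : V → ℝ) (v : V) :
    (adjMat G)ᵀ.mulVec y v = ∑ u ∈ Finset.univ.filter (fun u => G u v), y u := by
  simp [adjMat, Matrix.mulVec, dotProduct, Matrix.transpose, ite_mul,
    Finset.sum_filter]

theorem stmt2 (G : V → V → Prop) (w : V) :
    (∀ y : V → ℝ,
      (∀ v, v ≠ w → ∑ u ∈ Finset.univ.filter (fun u => G v u), y u = 0) →
      (∃ x ∈ CoKerD G, x w ≠ 0) →
      (∑ u ∈ Finset.univ.filter (fun u => G w u), y u = 0) ∧ y ∈ KerD G) ∧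
    (∀ y : V → ℝ,
      (∀ v, v ≠ w → ∑ u ∈ Finset.univ.filter (fun u => G u v), y u = 0) →
      (∃ x ∈ KerD G, x w ≠ 0) →
      (∑ u ∈ Finset.univ.filter (fun u => G u w), y u = 0) ∧ y ∈ CoKerD G) := by
  constructor
  · rintro y hy ⟨x, hx, hxw⟩
    have h0 : (adjMat G).mulVec y = 0 := by
      apply key_aux (adjMat G) y x w _ hx hxw
      intro v hv; rw [mulVec_adj]; exact hy v hv
    refine ⟨?_, h0⟩
    rw [← mulVec_adj, h0]; rfl
  · rintro y hy ⟨x, hx, hxw⟩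
    have hx' : ((adjMat G)ᵀ)ᵀ.mulVec x = 0 := by rwa [Matrix.transpose_transpose]
    have h0 : (adjMat G)ᵀ.mulVec y = 0 := by
      apply key_aux (adjMat G)ᵀ y x w _ hx' hxw
      intro v hv; rw [mulVecT_adj]; exact hy v hv
    refine ⟨?_, h0⟩
    rw [← mulVecT_adj, h0]; rfl
end

section
/- Let G be a singular digraph on a finite vertex type V with at least 2 vertices and let v ∈ V. If v is a laevo-core vertex then η(G − v) ≤ η(G). If in addition v is a dextro-core vertex, then η(G − v) = η(G) − 1. -/
open Matrix Finset
open scoped Classical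

variable {V : Type*} [Fintype V] [DecidableEq V]
variable {W : Type*} [Fintype W] [DecidableEq W]

/-!
Deleting `v` and extending by zero identifies `Ker (G - v)` with the vectors of `Ker G` vanishing
at `v`, provided `v` is laevo-core. Indeed, if `z ∈ Ker (G - v)` and `x` is its extension by zero,
then `A x` vanishes off `v`; pairing with a cokernel vector `y` gives `0 = yᵀ A x = y_v (A x)_v`,
so `y_v ≠ 0` forces `A x = 0`. The vectors of `Ker G` vanishing at `v` are the kernel of the
evaluation functional at `v` on `Ker G`: a subspace of dimension at most `η(G)`, and of dimension
exactly `η(G) - 1` when that functional is nonzero, i.e. when `v` is dextro-core.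
-/

theorem Submodule.finrank_inf_ker_add_one {K M : Type*} [Field K] [AddCommGroup M] [Module K M]
    {p : Submodule K M} [FiniteDimensional K p] {f : Module.Dual K M} {x : M} (hx : x ∈ p)
    (hfx : f x ≠ 0) : Module.finrank K ↥(p ⊓ LinearMap.ker f) + 1 = Module.finrank K p := by
  have hne : f.domRestrict p ≠ 0 := fun h => hfx (by simpa using LinearMap.congr_fun h ⟨x, hx⟩)
  rw [← Module.Dual.finrank_ker_add_one_of_ne_zero hne, LinearMap.ker_domRestrict,
    ← Submodule.map_comap_subtype, Submodule.finrank_map_subtype_eq]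

namespace Matrix

variable {m n R : Type*} [Fintype n] [CommSemiring R]

theorem mulVec_extend_val {p : n → Prop} [Fintype (Subtype p)] (A : Matrix m n R)
    (z : Subtype p → R) :
    A *ᵥ Function.extend Subtype.val z 0 = A.submatrix id Subtype.val *ᵥ z := by
  funext i
  refine (Fintype.sum_of_injective Subtype.val Subtype.val_injective _ _ (fun j hj => ?_)
    (fun j => ?_)).symm
  · rw [Function.extend_apply' _ _ _ (by simpa using hj), Pi.zero_apply, mul_zero]
  · rw [Subtype.val_injective.extend_apply]
    rfl

theorem mulVec_eq_zero_of_forall_ne [NoZeroDivisors R] {A : Matrix n n R} {x y : n → R} {v : n}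
    (hy : Aᵀ *ᵥ y = 0) (hyv : y v ≠ 0) (hx : ∀ u, u ≠ v → (A *ᵥ x) u = 0) : A *ᵥ x = 0 := by
  have hdot : y ⬝ᵥ (A *ᵥ x) = y v * (A *ᵥ x) v :=
    Finset.sum_eq_single v (fun u _ hu => by rw [hx u hu, mul_zero]) (by simp)
  have hv : (A *ᵥ x) v = 0 := by
    rw [dotProduct_mulVec, ← mulVec_transpose, hy, zero_dotProduct, eq_comm] at hdot
    exact (mul_eq_zero.mp hdot).resolve_left hyv
  funext u
  by_cases hu : u = v
  · rw [hu, hv]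
    rfl
  · exact hx u hu

theorem map_extendByZero_ker_submatrix_ne {K : Type*} [Field K] (A : Matrix V V K) {v : V}
    {y : V → K} (hy : Aᵀ *ᵥ y = 0) (hyv : y v ≠ 0) :
    (LinearMap.ker (A.submatrix (Subtype.val : {u // u ≠ v} → V) Subtype.val).mulVecLin).map
      (Function.ExtendByZero.linearMap K (Subtype.val : {u // u ≠ v} → V)) =
      LinearMap.ker A.mulVecLin ⊓ LinearMap.ker (LinearMap.proj v) := by
  ext x
  simp only [Submodule.mem_map, Submodule.mem_inf, LinearMap.mem_ker, mulVecLin_apply,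
    LinearMap.coe_proj, Function.eval]
  constructor
  · rintro ⟨z, hz, rfl⟩
    refine ⟨mulVec_eq_zero_of_forall_ne hy hyv fun u hu => ?_,
      Function.extend_apply' _ _ _ (by simp)⟩
    change (A *ᵥ Function.extend Subtype.val z 0) u = 0
    rw [mulVec_extend_val]
    exact congrFun hz ⟨u, hu⟩
  · rintro ⟨hx, hxv⟩
    have hx_ext : Function.extend Subtype.val (fun u : {u // u ≠ v} => x u) 0 = x := by
      funext u
      by_cases hu : u = v
      · rw [Function.extend_apply' _ _ _ (by simp [hu]), hu, hxv]
        rfl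
      · exact Subtype.val_injective.extend_apply _ _ ⟨u, hu⟩
    refine ⟨fun u => x u, funext fun u => ?_, hx_ext⟩
    have := congrFun (mulVec_extend_val A fun u : {u // u ≠ v} => x u) u
    rw [hx_ext, hx] at this
    exact this.symm

end Matrix

theorem nullityD_delV_of_laevo (G : V → V → Prop) {v : V} (hlaevo : ∃ y ∈ CoKerD G, y v ≠ 0) :
    nullityD (delV G v) =
      Module.finrank ℝ ↥(LinearMap.ker (adjMat G).mulVecLin ⊓ LinearMap.ker (LinearMap.proj v)) := by
  obtain ⟨y, hy, hyv⟩ := hlaevo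
  rw [← Matrix.map_extendByZero_ker_submatrix_ne (adjMat G) hy hyv]
  exact (Submodule.equivMapOfInjective _
    (Function.extend_injective Subtype.val_injective (0 : V → ℝ)) _).finrank_eq

theorem stmt3_general (G : V → V → Prop) (v : V) (hlaevo : ∃ x ∈ CoKerD G, x v ≠ 0) :
    nullityD (delV G v) ≤ nullityD G ∧
    ((∃ x ∈ KerD G, x v ≠ 0) → nullityD (delV G v) = nullityD G - 1) := by
  rw [nullityD_delV_of_laevo G hlaevo, nullityD]
  refine ⟨Submodule.finrank_mono inf_le_left, fun ⟨x, hx, hxv⟩ => ?_⟩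
  have := Submodule.finrank_inf_ker_add_one
    (p := LinearMap.ker (adjMat G).mulVecLin) (f := LinearMap.proj v) hx hxv
  omega

theorem stmt3 (G : V → V → Prop) (hcard : 2 ≤ Fintype.card V)
    (hsing : 0 < nullityD G) (v : V) (hlaevo : ∃ x ∈ CoKerD G, x v ≠ 0) :
    nullityD (delV G v) ≤ nullityD G ∧
    ((∃ x ∈ KerD G, x v ≠ 0) → nullityD (delV G v) = nullityD G - 1) :=
  stmt3_general G v hlaevo
end

section
/- Let G be a singular digraph on a finite vertex type V with at least 2 vertices and let v ∈ V. If v is laevo-core-forbidden or dextro-core-forbidden, then η(G − v) = η(G) or η(G − v) = η(G) + 1. -/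
open Matrix Finset
open scoped Classical

variable {V : Type*} [Fintype V] [DecidableEq V]
variable {W : Type*} [Fintype W] [DecidableEq W]

/-- zero extension as a linear map -/
noncomputable def extLin (v : V) : ({u : V // u ≠ v} → ℝ) →ₗ[ℝ] (V → ℝ) where
  toFun x := fun u => if h : u = v then 0 else x ⟨u, h⟩
  map_add' x y := by funext u; by_cases h : u = v <;> simp [h]
  map_smul' c x := by funext u; by_cases h : u = v <;> simp [h]

private lemma sum_split (v : V) (f : V → ℝ) :
    ∑ u, f u = f v + ∑ u : {u : V // u ≠ v}, f u.1 := by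
  have h : ∑ u ∈ ({v}ᶜ : Finset V), f u = ∑ u : {u : V // u ≠ v}, f u.1 :=
    Finset.sum_subtype ({v}ᶜ) (fun x => by simp) f
  rw [Fintype.sum_eq_add_sum_compl v f, h]

private lemma mulVec_extLin (A : Matrix V V ℝ) (v : V) (x : {u : V // u ≠ v} → ℝ) :
    A.mulVec (extLin v x) = (A.submatrix id (Subtype.val : {u : V // u ≠ v} → V)).mulVec x := by
  funext u
  simp only [mulVec, dotProduct, submatrix_apply, id_eq]
  rw [sum_split v]
  simp [extLin]
  exact Finset.sum_congr rfl fun w _ => by rw [if_neg w.2]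

private lemma mulVec_restrict (A : Matrix V V ℝ) (v : V) (y : V → ℝ) (hy : y v = 0) :
    (A.submatrix id (Subtype.val : {u : V // u ≠ v} → V)).mulVec (fun u => y u.1)
      = A.mulVec y := by
  funext u
  simp only [mulVec, dotProduct, submatrix_apply, id_eq]
  rw [sum_split v (fun w => A u w * y w), hy]
  ring

private lemma key (A : Matrix V V ℝ) (v : V) (h : ∀ x, A.mulVec x = 0 → x v = 0) :
    Module.finrank ℝ (LinearMap.ker
        (A.submatrix Subtype.val Subtype.val :
          Matrix {u : V // u ≠ v} {u : V // u ≠ v} ℝ).mulVecLin)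
      = Module.finrank ℝ (LinearMap.ker A.mulVecLin) ∨
    Module.finrank ℝ (LinearMap.ker
        (A.submatrix Subtype.val Subtype.val :
          Matrix {u : V // u ≠ v} {u : V // u ≠ v} ℝ).mulVecLin)
      = Module.finrank ℝ (LinearMap.ker A.mulVecLin) + 1 := by
  set C : Matrix V {u : V // u ≠ v} ℝ := A.submatrix id Subtype.val with hC
  set A' : Matrix {u : V // u ≠ v} {u : V // u ≠ v} ℝ := A.submatrix Subtype.val Subtype.val with hA'
  -- Step 1: finrank ker C = finrank ker A
  have hφmem : ∀ x ∈ LinearMap.ker C.mulVecLin, extLin v x ∈ LinearMap.ker A.mulVecLin := by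
    intro x hx
    simp only [LinearMap.mem_ker, mulVecLin_apply] at hx ⊢
    rw [mulVec_extLin]
    exact hx
  have hφinj : Function.Injective ((extLin v).restrict hφmem) := by
    intro a b hab
    apply Subtype.ext
    funext u
    have h1 := congrFun (congrArg Subtype.val hab) u.1
    simp only [LinearMap.restrict_apply, extLin, LinearMap.coe_mk, AddHom.coe_mk] at h1
    rw [dif_neg u.2, dif_neg u.2] at h1
    simpa using h1
  have hψmem : ∀ y ∈ LinearMap.ker A.mulVecLin,
      (LinearMap.funLeft ℝ ℝ (Subtype.val : {u : V // u ≠ v} → V)) y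
        ∈ LinearMap.ker C.mulVecLin := by
    intro y hy
    simp only [LinearMap.mem_ker, mulVecLin_apply] at hy ⊢
    have : (LinearMap.funLeft ℝ ℝ (Subtype.val : {u : V // u ≠ v} → V)) y
        = fun u : {u : V // u ≠ v} => y u.1 := rfl
    rw [this, mulVec_restrict A v y (h y hy)]
    exact hy
  have hψinj : Function.Injective
      ((LinearMap.funLeft ℝ ℝ (Subtype.val : {u : V // u ≠ v} → V)).restrict hψmem) := by
    intro a b hab
    apply Subtype.ext
    funext u
    by_cases hu : u = v
    · subst hu
      rw [h a.1 a.2, h b.1 b.2]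
    · exact congrFun (congrArg Subtype.val hab) ⟨u, hu⟩
  have h1 : Module.finrank ℝ (LinearMap.ker C.mulVecLin)
      = Module.finrank ℝ (LinearMap.ker A.mulVecLin) :=
    le_antisymm (LinearMap.finrank_le_finrank_of_injective hφinj)
      (LinearMap.finrank_le_finrank_of_injective hψinj)
  -- Step 2: ker C ≤ ker A'
  have hle : LinearMap.ker C.mulVecLin ≤ LinearMap.ker A'.mulVecLin := by
    intro x hx
    simp only [LinearMap.mem_ker, mulVecLin_apply] at hx ⊢
    funext u
    have := congrFun hx u.1
    simpa [hA', hC, mulVec, dotProduct] using this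
  have h2 : Module.finrank ℝ (LinearMap.ker C.mulVecLin)
      ≤ Module.finrank ℝ (LinearMap.ker A'.mulVecLin) := Submodule.finrank_mono hle
  -- Step 3: finrank ker A' ≤ finrank ker C + 1
  have h3 : Module.finrank ℝ (LinearMap.ker A'.mulVecLin)
      ≤ Module.finrank ℝ (LinearMap.ker C.mulVecLin) + 1 := by
    set f : ({u : V // u ≠ v} → ℝ) →ₗ[ℝ] ℝ := (LinearMap.proj v).comp C.mulVecLin with hf
    set g := f.domRestrict (LinearMap.ker A'.mulVecLin) with hg
    have hrn := LinearMap.finrank_range_add_finrank_ker g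
    have hrange : Module.finrank ℝ (LinearMap.range g) ≤ 1 := by
      have := Submodule.finrank_le (LinearMap.range g)
      simpa using this
    have hker : Module.finrank ℝ (LinearMap.ker g)
        ≤ Module.finrank ℝ (LinearMap.ker C.mulVecLin) := by
      have hmem : ∀ x : LinearMap.ker g, ((x : LinearMap.ker A'.mulVecLin) : {u : V // u ≠ v} → ℝ)
          ∈ LinearMap.ker C.mulVecLin := by
        intro x
        have hx1 : A'.mulVec ((x : LinearMap.ker A'.mulVecLin) : {u : V // u ≠ v} → ℝ) = 0 :=
          (x : LinearMap.ker A'.mulVecLin).2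
        have hx2 : C.mulVec ((x : LinearMap.ker A'.mulVecLin) : {u : V // u ≠ v} → ℝ) v = 0 := x.2
        simp only [LinearMap.mem_ker, mulVecLin_apply]
        funext u
        by_cases hu : u = v
        · subst hu; exact hx2
        · have := congrFun hx1 ⟨u, hu⟩
          simpa [hA', hC, mulVec, dotProduct] using this
      let F : LinearMap.ker g →ₗ[ℝ] LinearMap.ker C.mulVecLin :=
        { toFun := fun x => ⟨_, hmem x⟩
          map_add' := fun a b => by apply Subtype.ext; rfl
          map_smul' := fun c a => by apply Subtype.ext; rfl }
      have inj : Function.Injective F := by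
        intro a b hab
        have h' : (F a).1 = (F b).1 := congrArg Subtype.val hab
        exact Subtype.ext (Subtype.ext h')
      exact LinearMap.finrank_le_finrank_of_injective (f := F) inj
    omega
  rw [h1] at h2 h3
  omega

private lemma nullity_transpose (B : Matrix V V ℝ) :
    Module.finrank ℝ (LinearMap.ker Bᵀ.mulVecLin)
      = Module.finrank ℝ (LinearMap.ker B.mulVecLin) := by
  have h1 := LinearMap.finrank_range_add_finrank_ker B.mulVecLin
  have h2 := LinearMap.finrank_range_add_finrank_ker Bᵀ.mulVecLin
  have hr : Bᵀ.rank = B.rank := Matrix.rank_transpose B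
  rw [Matrix.rank, Matrix.rank] at hr
  omega

theorem stmt4 (G : V → V → Prop) (hcard : 2 ≤ Fintype.card V)
    (hsing : 0 < nullityD G) (v : V)
    (hforb : (∀ x ∈ CoKerD G, x v = 0) ∨ (∀ x ∈ KerD G, x v = 0)) :
    nullityD (delV G v) = nullityD G ∨ nullityD (delV G v) = nullityD G + 1 := by
  have hadj : adjMat (delV G v) = ((adjMat G).submatrix Subtype.val Subtype.val :
      Matrix {u : V // u ≠ v} {u : V // u ≠ v} ℝ) := rfl
  have hd : nullityD (delV G v) = Module.finrank ℝ (LinearMap.ker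
      ((adjMat G).submatrix Subtype.val Subtype.val :
        Matrix {u : V // u ≠ v} {u : V // u ≠ v} ℝ).mulVecLin) := by
    rw [nullityD, hadj]
  rcases hforb with h1 | h2
  · -- laevo case: apply key to the transpose
    have hk := key ((adjMat G)ᵀ) v (fun x hx => h1 x hx)
    have hsub : ((adjMat G)ᵀ.submatrix Subtype.val Subtype.val :
        Matrix {u : V // u ≠ v} {u : V // u ≠ v} ℝ)
        = ((adjMat G).submatrix Subtype.val Subtype.val :
        Matrix {u : V // u ≠ v} {u : V // u ≠ v} ℝ)ᵀ := rfl
    rw [hsub] at hk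
    rw [nullity_transpose ((adjMat G).submatrix Subtype.val Subtype.val),
      nullity_transpose (adjMat G)] at hk
    rcases hk with hk | hk
    · exact Or.inl (hd.trans hk)
    · exact Or.inr (hd.trans hk)
  · -- dextro case
    rcases key (adjMat G) v (fun x hx => h2 x hx) with hk | hk
    · exact Or.inl (hd.trans hk)
    · exact Or.inr (hd.trans hk)
end

section
/- Let G be a singular bipartite digraph on a finite vertex type V with at least 2 vertices and let v ∈ V be both dextro-core-forbidden and laevo-core-forbidden. Then η(G − v) = η(G) + 1. -/
open Matrix Finset
open scoped Classical

variable {V : Type*} [Fintype V] [DecidableEq V]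
variable {W : Type*} [Fintype W] [DecidableEq W]

/-! Let `A'` be the square matrix `A` with row and column `v` deleted. Extension by zero
identifies `ker A'` with `{x | x v = 0, A x ∈ span e_v}`. If every kernel vector vanishes at `v`
and some `x₀` with `x₀ v = 0` satisfies `A x₀ = e_v`, this space is `ker A ⊕ span x₀`, so the
nullity grows by one.

Laevo-core-forbiddenness says `e_v` is orthogonal to the cokernel, so `e_v = A z` for some `z`.
For a bipartite digraph the signature matrix `D` of the bipartition anticommutes with `A`, so
`A (D z) = -ε_v e_v`, and `x₀ = (z - ε_v D z) / 2` vanishes at `v` while still `A x₀ = e_v`. -/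

open Module Function

section LinearAlgebra

variable {K E F : Type*} [Field K] [AddCommGroup E] [Module K E] [AddCommGroup F] [Module K F]

theorem Submodule.finrank_comap_of_le_range [FiniteDimensional K E] (f : E →ₗ[K] F)
    {p : Submodule K F} (hp : p ≤ LinearMap.range f) :
    finrank K (p.comap f) = finrank K (LinearMap.ker f) + finrank K p := by
  let g : p.comap f →ₗ[K] p := f.restrict fun _ hx => hx
  have hg : LinearMap.range g = ⊤ := by
    rw [LinearMap.range_restrict, Submodule.map_comap_eq_of_le hp, Submodule.comap_subtype_self]
  have hker : LinearMap.ker g ≃ₗ[K] LinearMap.ker f := by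
    rw [LinearMap.ker_restrict]
    exact Submodule.comapSubtypeEquivOfLe fun x hx => by simp [LinearMap.mem_ker.mp hx]
  rw [← LinearMap.finrank_range_add_finrank_ker g, hg, finrank_top, hker.finrank_eq, add_comm]

end LinearAlgebra

namespace Matrix

variable {K m n : Type*} [Field K] [Fintype m] [Fintype n]

theorem mem_range_mulVecLin_of_forall_transpose [DecidableEq m] (M : Matrix m n K) {b : m → K}
    (h : ∀ y, Mᵀ *ᵥ y = 0 → y ⬝ᵥ b = 0) : b ∈ LinearMap.range M.mulVecLin := by
  rw [← Subspace.forall_mem_dualAnnihilator_apply_eq_zero_iff]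
  intro φ hφ
  obtain ⟨y, rfl⟩ := (dotProductEquiv K m).surjective φ
  refine h y (dotProduct_eq_zero_iff.mp fun x => ?_)
  rw [dotProduct_comm, dotProduct_transpose_mulVec]
  exact (Submodule.mem_dualAnnihilator _).mp hφ _ ⟨x, rfl⟩

theorem submatrix_mulVec_eq_comp {ι : Type*} [Fintype ι] (M : Matrix n n K) {e : ι → n}
    (he : Injective e) (x : ι → K) :
    M.submatrix e e *ᵥ x = (M *ᵥ extend e x 0) ∘ e := by
  ext i
  refine Fintype.sum_of_injective e he _ _ (fun j hj => ?_) fun j => ?_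
  · simp [extend_apply' _ _ _ fun ⟨a, ha⟩ => hj ⟨a, ha⟩]
  · simp [he.extend_apply]

theorem exists_mulVec_eq_single_of_anticommute [DecidableEq n] [NeZero (2 : K)]
    {M : Matrix n n K} {ε : n → K} (hM : M * diagonal ε = -(diagonal ε * M)) {v : n}
    (hεv : ε v * ε v = 1) {z : n → K} (hz : M *ᵥ z = Pi.single v 1) :
    ∃ x, x v = 0 ∧ M *ᵥ x = Pi.single v 1 := by
  have hflip : M *ᵥ (diagonal ε *ᵥ z) = -Pi.single v (ε v) := by
    rw [mulVec_mulVec, hM, neg_mulVec, ← mulVec_mulVec, hz, diagonal_mulVec_single, mul_one]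
  refine ⟨(2 : K)⁻¹ • (z - ε v • diagonal ε *ᵥ z), ?_, ?_⟩
  · simp [mulVec_diagonal, ← mul_assoc, hεv]
  · rw [mulVec_smul, mulVec_sub, mulVec_smul, hflip, hz]
    ext u
    rcases eq_or_ne u v with rfl | hu
    · simp [hεv, one_add_one_eq_two, two_ne_zero]
    · simp [hu]

end Matrix

section DeleteIndex

variable {K n : Type*} [Field K] [DecidableEq n] (v : n)

theorem mem_span_single_iff_comp_val_eq_zero {y : n → K} :
    y ∈ K ∙ Pi.single v 1 ↔ y ∘ (Subtype.val : {u // u ≠ v} → n) = 0 := by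
  rw [Submodule.mem_span_singleton]
  constructor
  · rintro ⟨a, rfl⟩
    ext ⟨u, hu⟩
    simp [hu]
  · intro h
    refine ⟨y v, funext fun u => ?_⟩
    by_cases hu : u = v
    · subst hu
      simp
    · simpa [hu] using (congrFun h ⟨u, hu⟩).symm

theorem extend_val_comp_val {y : n → K} (hy : y v = 0) :
    extend (Subtype.val : {u // u ≠ v} → n) (y ∘ Subtype.val) 0 = y := by
  ext u
  by_cases hu : u = v
  · subst hu
    rw [extend_apply' _ _ _ (by simp), hy]
    rfl
  · exact Subtype.val_injective.extend_apply _ _ (⟨u, hu⟩ : {u // u ≠ v})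

theorem Matrix.finrank_ker_submatrix_ne_eq_add_one [Fintype n] (M : Matrix n n K)
    (hker : ∀ x, M *ᵥ x = 0 → x v = 0) {x₀ : n → K} (hx₀v : x₀ v = 0)
    (hx₀ : M *ᵥ x₀ = Pi.single v 1) :
    finrank K (LinearMap.ker
        (M.submatrix (↑) (↑) : Matrix {u // u ≠ v} {u // u ≠ v} K).mulVecLin)
      = finrank K (LinearMap.ker M.mulVecLin) + 1 := by
  let ext := ExtendByZero.linearMap K (Subtype.val : {u // u ≠ v} → n)
  have ext_apply (x) : ext x = extend Subtype.val x 0 := rfl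
  have hsub : LinearMap.ker
      (M.submatrix (↑) (↑) : Matrix {u // u ≠ v} {u // u ≠ v} K).mulVecLin
      = (K ∙ Pi.single v 1).comap (M.mulVecLin ∘ₗ ext) := by
    ext x
    simp [ext_apply, mem_span_single_iff_comp_val_eq_zero,
      submatrix_mulVec_eq_comp _ Subtype.val_injective]
  have hsingle : K ∙ Pi.single v (1 : K) ≤ LinearMap.range (M.mulVecLin ∘ₗ ext) := by
    rw [Submodule.span_singleton_le_iff_mem]
    exact ⟨x₀ ∘ Subtype.val, by simp [ext_apply, extend_val_comp_val v hx₀v, hx₀]⟩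
  have hkerM : LinearMap.ker M.mulVecLin ≤ LinearMap.range ext := fun x hx =>
    ⟨x ∘ Subtype.val, extend_val_comp_val v (hker x hx)⟩
  have hext : LinearMap.ker ext = ⊥ :=
    LinearMap.ker_eq_bot.mpr (extend_injective Subtype.val_injective (0 : n → K))
  rw [hsub, Submodule.finrank_comap_of_le_range _ hsingle, LinearMap.ker_comp,
    Submodule.finrank_comap_of_le_range _ hkerM, hext, finrank_bot, zero_add,
    finrank_span_singleton (by simp)]

end DeleteIndex

theorem exists_signature_anticommute_adjMat (G : V → V → Prop) {S : Set V}
    (hS : ∀ ⦃a b⦄, G a b → Xor (a ∈ S) (b ∈ S)) :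
    ∃ ε : V → ℝ, (∀ u, ε u * ε u = 1) ∧ adjMat G * diagonal ε = -(diagonal ε * adjMat G) := by
  refine ⟨fun u => if u ∈ S then 1 else -1, fun u => by by_cases hu : u ∈ S <;> simp [hu], ?_⟩
  ext a b
  simp only [mul_diagonal, diagonal_mul, Matrix.neg_apply, adjMat, of_apply]
  by_cases h : G a b
  · rcases hS h with ⟨ha, hb⟩ | ⟨hb, ha⟩ <;> simp [h, ha, hb]
  · simp [h]

theorem adjMat_delV {α : Type*} (G : α → α → Prop) (v : α) :
    adjMat (delV G v) = (adjMat G).submatrix Subtype.val Subtype.val := rfl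

theorem stmt6_general (G : V → V → Prop)
    (hbip : ∃ S : Set V, ∀ ⦃a b : V⦄, G a b → Xor' (a ∈ S) (b ∈ S))
    (v : V) (hd : ∀ x ∈ KerD G, x v = 0) (hl : ∀ x ∈ CoKerD G, x v = 0) :
    nullityD (delV G v) = nullityD G + 1 := by
  obtain ⟨S, hS⟩ := hbip
  obtain ⟨ε, hε, hanti⟩ := exists_signature_anticommute_adjMat G hS
  obtain ⟨z, hz⟩ := (adjMat G).mem_range_mulVecLin_of_forall_transpose
    (b := Pi.single v 1) fun y hy => by rw [dotProduct_single_one]; exact hl y hy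
  obtain ⟨x₀, hx₀v, hx₀⟩ := Matrix.exists_mulVec_eq_single_of_anticommute hanti (hε v) hz
  rw [nullityD, nullityD, adjMat_delV]
  exact Matrix.finrank_ker_submatrix_ne_eq_add_one v (adjMat G) hd hx₀v hx₀

theorem stmt6 (G : V → V → Prop) (hcard : 2 ≤ Fintype.card V)
    (hsing : 0 < nullityD G)
    (hbip : ∃ S : Set V, ∀ ⦃a b : V⦄, G a b → Xor' (a ∈ S) (b ∈ S))
    (v : V) (hd : ∀ x ∈ KerD G, x v = 0) (hl : ∀ x ∈ CoKerD G, x v = 0) :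
    nullityD (delV G v) = nullityD G + 1 :=
  stmt6_general G hbip v hd hl
end

section
/- Every bi-nut digraph is strongly connected: if G is a bi-nut digraph on a finite vertex type V, then for all u, v ∈ V there is a directed walk from u to v, i.e. Relation.ReflTransGen G u v. -/
open Matrix Finset
open scoped Classical

variable {V : Type*} [Fintype V] [DecidableEq V]
variable {W : Type*} [Fintype W] [DecidableEq W]

theorem stmt8 (G : V → V → Prop) (hbi : IsBiNut G) :
    ∀ u v : V, Relation.ReflTransGen G u v := by
  obtain ⟨⟨x, hxker, hxfull, -⟩, ⟨y, -, hyfull, hyspan⟩⟩ := hbi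
  intro u v
  by_contra hv
  set S : Set V := {w | Relation.ReflTransGen G u w} with hS
  have huS : u ∈ S := Relation.ReflTransGen.refl
  have hvS : v ∉ S := hv
  have hclosed : ∀ ⦃a b⦄, a ∈ S → G a b → b ∈ S := fun a b ha h => ha.tail h
  have hAzero : ∀ ⦃a b⦄, a ∈ S → b ∉ S → adjMat G a b = 0 := by
    intro a b ha hb
    simp only [adjMat, Matrix.of_apply, ite_eq_right_iff]
    exact fun h => absurd (hclosed ha h) hb
  set A' : Matrix V V ℝ := Matrix.of (fun a b =>
    if a ∈ S ∧ b ∈ S then adjMat G a b else if a = b ∧ a ∉ S then 1 else 0) with hA'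
  set x' : V → ℝ := fun w => if w ∈ S then x w else 0 with hx'
  have hx'0 : x' ≠ 0 := by
    intro h
    have h2 := congrFun h u
    simp only [hx', if_pos huS, Pi.zero_apply] at h2
    exact hxfull u h2
  have hmul : A'.mulVec x' = 0 := by
    funext a
    by_cases ha : a ∈ S
    · have heq : A'.mulVec x' a = (adjMat G).mulVec x a := by
        simp only [Matrix.mulVec, dotProduct]
        refine Finset.sum_congr rfl fun b _ => ?_
        by_cases hb : b ∈ S
        · simp [hA', hx', ha, hb]
        · simp [hA', hx', ha, hb, hAzero ha hb]
      rw [heq, hxker]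
    · have heq : A'.mulVec x' a = x' a := by
        simp only [Matrix.mulVec, dotProduct]
        rw [Finset.sum_eq_single a]
        · simp [hA', ha]
        · intro b _ hb
          simp [hA', ha, fun h : a ∈ S ∧ b ∈ S => ha h.1, (Ne.symm hb : a ≠ b)]
        · intro h; exact absurd (Finset.mem_univ a) h
      rw [heq]
      simp [hx', ha]
  have hdet : A'.det = 0 := by
    rw [← Matrix.exists_mulVec_eq_zero_iff]
    exact ⟨x', hx'0, hmul⟩
  have hdetT : A'ᵀ.det = 0 := by rwa [Matrix.det_transpose]
  obtain ⟨q, hq0, hqmul⟩ := (Matrix.exists_mulVec_eq_zero_iff).mpr hdetT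
  have hqsupp : ∀ w, w ∉ S → q w = 0 := by
    intro w hw
    have h2 := congrFun hqmul w
    simp only [Matrix.mulVec, dotProduct, Matrix.transpose_apply, Pi.zero_apply] at h2
    rw [Finset.sum_eq_single w] at h2
    · simpa [hA', hw] using h2
    · intro b _ hb
      have hz : A' b w = 0 := by
        simp only [hA', Matrix.of_apply]
        rw [if_neg (fun h => hw h.2), if_neg (fun h => hb h.1)]
      rw [hz, zero_mul]
    · intro h; exact absurd (Finset.mem_univ w) h
  have hqco : q ∈ CoKerD G := by
    show (adjMat G)ᵀ.mulVec q = 0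
    funext w
    have h2 := congrFun hqmul w
    simp only [Matrix.mulVec, dotProduct, Matrix.transpose_apply, Pi.zero_apply] at h2 ⊢
    rw [← h2]
    refine Finset.sum_congr rfl fun b _ => ?_
    by_cases hbS : b ∈ S
    · by_cases hwS : w ∈ S
      · simp [hA', hbS, hwS]
      · have hz : A' b w = 0 := by
          simp only [hA', Matrix.of_apply]
          rw [if_neg (fun h => hwS h.2), if_neg (fun h => h.2 hbS)]
        rw [hz, hAzero hbS hwS]
    · rw [hqsupp b hbS]; ring
  obtain ⟨c, hc⟩ := hyspan q hqco
  have hc0 : c = 0 := by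
    have := congrFun hc v
    rw [hqsupp v hvS] at this
    have := this.symm
    simp only [Pi.smul_apply, smul_eq_mul, mul_eq_zero] at this
    exact this.resolve_right (hyfull v)
  apply hq0
  rw [hc, hc0, zero_smul]
end

section
/- Let G be an inter-nut digraph on a finite vertex type V with an arc u → v. Let G̃ be the digraph on V ⊕ Fin 4 (the four new vertices being u', u'', v', v'') obtained from G by removing the arc u → v and adding the five arcs u → v'', u' → v'', u' → v', u'' → v', u'' → v, keeping all other arcs of G. Then G̃ is an inter-nut digraph, and G̃ is not an ambi-nut digraph (indeed Ker G̃ ≠ CoKer G̃). -/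
open Matrix Finset
open scoped Classical

variable {V : Type*} [Fintype V] [DecidableEq V]
variable {W : Type*} [Fintype W] [DecidableEq W]

def subdiv (G : V → V → Prop) (u v : V) : (V ⊕ Fin 4) → (V ⊕ Fin 4) → Prop
  | Sum.inl a, Sum.inl b => G a b ∧ ¬(a = u ∧ b = v)
  | Sum.inl a, Sum.inr k => a = u ∧ k = 3
  | Sum.inr k, Sum.inl b => k = 1 ∧ b = v
  | Sum.inr k, Sum.inr l => (k = 0 ∧ l = 3) ∨ (k = 0 ∧ l = 2) ∨ (k = 1 ∧ l = 2)

lemma row_inl (G : V → V → Prop) (u v : V) (harc : G u v) (y : V ⊕ Fin 4 → ℝ) (a : V) :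
    (adjMat (subdiv G u v)).mulVec y (Sum.inl a)
      = (adjMat G).mulVec (fun b => y (Sum.inl b)) a
        - (if a = u then y (Sum.inl v) else 0) + (if a = u then y (Sum.inr 3) else 0) := by
  simp only [adjMat, Matrix.mulVec, dotProduct, Fintype.sum_sum_type, Matrix.of_apply]
  have h4 : ∑ k : Fin 4, (if subdiv G u v (Sum.inl a) (Sum.inr k) then (1:ℝ) else 0) * y (Sum.inr k)
      = if a = u then y (Sum.inr 3) else 0 := by
    rw [Fin.sum_univ_four]
    by_cases h : a = u <;> simp [subdiv, h]
  have hV : ∑ b : V, (if subdiv G u v (Sum.inl a) (Sum.inl b) then (1:ℝ) else 0) * y (Sum.inl b)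
      = (∑ b : V, (if G a b then (1:ℝ) else 0) * y (Sum.inl b))
        - (if a = u then y (Sum.inl v) else 0) := by
    have key : ∀ b : V, (if subdiv G u v (Sum.inl a) (Sum.inl b) then (1:ℝ) else 0) * y (Sum.inl b)
        = (if G a b then (1:ℝ) else 0) * y (Sum.inl b)
          - (if a = u ∧ b = v then y (Sum.inl v) else 0) := by
      intro b
      by_cases h1 : a = u ∧ b = v
      · obtain ⟨ha, hb⟩ := h1
        subst ha; subst hb
        simp [subdiv, harc]
      · simp [subdiv, h1]
    rw [Finset.sum_congr rfl (fun b _ => key b), Finset.sum_sub_distrib]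
    congr 1
    by_cases h : a = u <;> simp [h, Finset.sum_ite_eq']
  rw [h4, hV]

lemma col_inl (G : V → V → Prop) (u v : V) (harc : G u v) (y : V ⊕ Fin 4 → ℝ) (b : V) :
    (adjMat (subdiv G u v))ᵀ.mulVec y (Sum.inl b)
      = (adjMat G)ᵀ.mulVec (fun a => y (Sum.inl a)) b
        - (if b = v then y (Sum.inl u) else 0) + (if b = v then y (Sum.inr 1) else 0) := by
  simp only [adjMat, Matrix.mulVec, dotProduct, Fintype.sum_sum_type, Matrix.of_apply,
    Matrix.transpose_apply]
  have h4 : ∑ k : Fin 4, (if subdiv G u v (Sum.inr k) (Sum.inl b) then (1:ℝ) else 0) * y (Sum.inr k)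
      = if b = v then y (Sum.inr 1) else 0 := by
    rw [Fin.sum_univ_four]
    by_cases h : b = v <;> simp [subdiv, h]
  have hV : ∑ a : V, (if subdiv G u v (Sum.inl a) (Sum.inl b) then (1:ℝ) else 0) * y (Sum.inl a)
      = (∑ a : V, (if G a b then (1:ℝ) else 0) * y (Sum.inl a))
        - (if b = v then y (Sum.inl u) else 0) := by
    have key : ∀ a : V, (if subdiv G u v (Sum.inl a) (Sum.inl b) then (1:ℝ) else 0) * y (Sum.inl a)
        = (if G a b then (1:ℝ) else 0) * y (Sum.inl a)
          - (if a = u ∧ b = v then y (Sum.inl u) else 0) := by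
      intro a
      by_cases h1 : a = u ∧ b = v
      · obtain ⟨ha, hb⟩ := h1
        subst ha; subst hb
        simp [subdiv, harc]
      · simp [subdiv, h1]
    rw [Finset.sum_congr rfl (fun a _ => key a), Finset.sum_sub_distrib]
    congr 1
    by_cases h : b = v <;> simp [h, Finset.sum_ite_eq]
  rw [h4, hV]

lemma row_inr (G : V → V → Prop) (u v : V) (y : V ⊕ Fin 4 → ℝ) (k : Fin 4) :
    (adjMat (subdiv G u v)).mulVec y (Sum.inr k)
      = (if k = 0 then y (Sum.inr 2) + y (Sum.inr 3) else 0)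
        + (if k = 1 then y (Sum.inl v) + y (Sum.inr 2) else 0) := by
  simp only [adjMat, Matrix.mulVec, dotProduct, Fintype.sum_sum_type, Matrix.of_apply]
  have h4 : ∑ l : Fin 4, (if subdiv G u v (Sum.inr k) (Sum.inr l) then (1:ℝ) else 0) * y (Sum.inr l)
      = (if k = 0 then y (Sum.inr 2) + y (Sum.inr 3) else 0)
        + (if k = 1 then y (Sum.inr 2) else 0) := by
    rw [Fin.sum_univ_four]
    fin_cases k <;> simp [subdiv]
  have hV : ∑ b : V, (if subdiv G u v (Sum.inr k) (Sum.inl b) then (1:ℝ) else 0) * y (Sum.inl b)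
      = if k = 1 then y (Sum.inl v) else 0 := by
    by_cases h : k = 1 <;> simp [subdiv, h, Finset.sum_ite_eq']
  rw [h4, hV]
  by_cases h0 : k = 0 <;> by_cases h1 : k = 1 <;> simp_all

lemma col_inr (G : V → V → Prop) (u v : V) (y : V ⊕ Fin 4 → ℝ) (k : Fin 4) :
    (adjMat (subdiv G u v))ᵀ.mulVec y (Sum.inr k)
      = (if k = 2 then y (Sum.inr 0) + y (Sum.inr 1) else 0)
        + (if k = 3 then y (Sum.inl u) + y (Sum.inr 0) else 0) := by
  simp only [adjMat, Matrix.mulVec, dotProduct, Fintype.sum_sum_type, Matrix.of_apply,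
    Matrix.transpose_apply]
  have h4 : ∑ l : Fin 4, (if subdiv G u v (Sum.inr l) (Sum.inr k) then (1:ℝ) else 0) * y (Sum.inr l)
      = (if k = 2 then y (Sum.inr 0) + y (Sum.inr 1) else 0)
        + (if k = 3 then y (Sum.inr 0) else 0) := by
    rw [Fin.sum_univ_four]
    fin_cases k <;> simp [subdiv]
  have hV : ∑ a : V, (if subdiv G u v (Sum.inl a) (Sum.inr k) then (1:ℝ) else 0) * y (Sum.inl a)
      = if k = 3 then y (Sum.inl u) else 0 := by
    by_cases h : k = 3 <;> simp [subdiv, h, Finset.sum_ite_eq]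
  rw [h4, hV]
  by_cases h2 : k = 2 <;> by_cases h3 : k = 3 <;> simp_all

theorem stmt13 (G : V → V → Prop) (u v : V) (harc : G u v)
    (hinter : IsInterNut G) :
    IsInterNut (subdiv G u v) ∧ ¬ IsAmbiNut (subdiv G u v) ∧
    KerD (subdiv G u v) ≠ CoKerD (subdiv G u v) := by
  obtain ⟨x, hfull, ⟨hk, hc⟩, hspan⟩ := hinter
  have hkx : (adjMat G).mulVec x = 0 := hk
  have hcx : (adjMat G)ᵀ.mulVec x = 0 := hc
  -- the distinguished full vector on the new graph
  set xt : V ⊕ Fin 4 → ℝ := Sum.elim x ![-x u, x u, -x v, x v] with hxt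
  have hxt_inl : ∀ a, xt (Sum.inl a) = x a := fun a => rfl
  have hxt0 : xt (Sum.inr 0) = -x u := rfl
  have hxt1 : xt (Sum.inr 1) = x u := rfl
  have hxt2 : xt (Sum.inr 2) = -x v := rfl
  have hxt3 : xt (Sum.inr 3) = x v := rfl
  have hxtK : xt ∈ KerD (subdiv G u v) := by
    show (adjMat (subdiv G u v)).mulVec xt = 0
    funext i
    rcases i with a | k
    · rw [row_inl G u v harc xt a]
      have : (fun b => xt (Sum.inl b)) = x := rfl
      rw [this, hkx]
      by_cases h : a = u <;> simp [h, hxt3, hxt_inl]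
    · rw [row_inr G u v xt k]
      fin_cases k <;> simp [hxt2, hxt3, hxt_inl]
  have hxtC : xt ∈ CoKerD (subdiv G u v) := by
    show (adjMat (subdiv G u v))ᵀ.mulVec xt = 0
    funext i
    rcases i with b | k
    · rw [col_inl G u v harc xt b]
      have : (fun a => xt (Sum.inl a)) = x := rfl
      rw [this, hcx]
      by_cases h : b = v <;> simp [h, hxt1, hxt_inl]
    · rw [col_inr G u v xt k]
      fin_cases k <;> simp [hxt0, hxt1, hxt_inl]
  have hxtFull : Full xt := by
    rintro (a | k)
    · exact hfull a
    · fin_cases k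
      · exact neg_ne_zero.mpr (hfull u)
      · exact hfull u
      · exact neg_ne_zero.mpr (hfull v)
      · exact hfull v
  -- spanning
  have hspan' : ∀ y ∈ KerD (subdiv G u v) ∩ CoKerD (subdiv G u v), ∃ c : ℝ, y = c • xt := by
    rintro y ⟨hyK, hyC⟩
    have hyK' : ∀ i, (adjMat (subdiv G u v)).mulVec y i = 0 := fun i => congrFun hyK i
    have hyC' : ∀ i, (adjMat (subdiv G u v))ᵀ.mulVec y i = 0 := fun i => congrFun hyC i
    have e0 : y (Sum.inr 2) + y (Sum.inr 3) = 0 := by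
      have := hyK' (Sum.inr 0); rw [row_inr] at this; simpa using this
    have e1 : y (Sum.inl v) + y (Sum.inr 2) = 0 := by
      have := hyK' (Sum.inr 1); rw [row_inr] at this; simpa using this
    have e2 : y (Sum.inr 0) + y (Sum.inr 1) = 0 := by
      have := hyC' (Sum.inr 2); rw [col_inr] at this; simpa using this
    have e3 : y (Sum.inl u) + y (Sum.inr 0) = 0 := by
      have := hyC' (Sum.inr 3); rw [col_inr] at this; simpa using this
    have hy3 : y (Sum.inr 3) = y (Sum.inl v) := by linarith
    have hy2 : y (Sum.inr 2) = -y (Sum.inl v) := by linarith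
    have hy0 : y (Sum.inr 0) = -y (Sum.inl u) := by linarith
    have hy1 : y (Sum.inr 1) = y (Sum.inl u) := by linarith
    have hyVK : (adjMat G).mulVec (fun b => y (Sum.inl b)) = 0 := by
      funext a
      have := hyK' (Sum.inl a); rw [row_inl G u v harc] at this
      by_cases h : a = u
      · subst h
        rw [if_pos rfl, if_pos rfl, hy3] at this
        simpa using this
      · simpa [h] using this
    have hyVC : (adjMat G)ᵀ.mulVec (fun a => y (Sum.inl a)) = 0 := by
      funext b
      have := hyC' (Sum.inl b); rw [col_inl G u v harc] at this
      by_cases h : b = v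
      · subst h
        rw [if_pos rfl, if_pos rfl, hy1] at this
        simpa using this
      · simpa [h] using this
    obtain ⟨c, hcy⟩ := hspan (fun b => y (Sum.inl b)) ⟨hyVK, hyVC⟩
    have hcy' : ∀ a, y (Sum.inl a) = c * x a := fun a => congrFun hcy a
    refine ⟨c, ?_⟩
    funext i
    rcases i with a | k
    · exact hcy' a
    · fin_cases k
      · show y (Sum.inr 0) = c * xt (Sum.inr 0)
        rw [hy0, hcy' u, hxt0]; ring
      · show y (Sum.inr 1) = c * xt (Sum.inr 1)
        rw [hy1, hcy' u, hxt1]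
      · show y (Sum.inr 2) = c * xt (Sum.inr 2)
        rw [hy2, hcy' v, hxt2]; ring
      · show y (Sum.inr 3) = c * xt (Sum.inr 3)
        rw [hy3, hcy' v, hxt3]
  -- the kernel-only vector z (indicator of u')
  set z : V ⊕ Fin 4 → ℝ := fun i => if i = Sum.inr 0 then 1 else 0 with hz
  have hzK : z ∈ KerD (subdiv G u v) := by
    show (adjMat (subdiv G u v)).mulVec z = 0
    funext i
    rcases i with a | k
    · rw [row_inl G u v harc z a]
      have h0 : (fun b => z (Sum.inl b)) = (0 : V → ℝ) := by funext b; simp [hz]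
      rw [h0, Matrix.mulVec_zero]
      by_cases h : a = u <;> simp [h, hz]
    · rw [row_inr G u v z k]
      fin_cases k <;> simp [hz]
  have hzC : z ∉ CoKerD (subdiv G u v) := by
    intro hmem
    have := congrFun (hmem : (adjMat (subdiv G u v))ᵀ.mulVec z = 0) (Sum.inr 3)
    rw [col_inr] at this
    simp [hz] at this
  have hne : KerD (subdiv G u v) ≠ CoKerD (subdiv G u v) := by
    intro h
    exact hzC (h ▸ hzK)
  refine ⟨⟨xt, hxtFull, ⟨hxtK, hxtC⟩, hspan'⟩, ?_, hne⟩
  rintro ⟨w, hwf, hwK, hwC, hKspan, hCspan⟩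
  apply hne
  ext y
  constructor
  · rintro hy
    obtain ⟨c, rfl⟩ := hKspan y hy
    show (adjMat (subdiv G u v))ᵀ.mulVec (c • w) = 0
    rw [Matrix.mulVec_smul, hwC]
    simp
  · rintro hy
    obtain ⟨c, rfl⟩ := hCspan y hy
    show (adjMat (subdiv G u v)).mulVec (c • w) = 0
    rw [Matrix.mulVec_smul, hwK]
    simp
end

section
/- No inter-nut digraph contains a cut-arc: if G is an inter-nut digraph on a finite vertex type V and u → w is an arc of G, then the digraph G' obtained from G by deleting the arc u → w still has a connected underlying graph, i.e. for all a, b ∈ V there is a walk from a to b in the symmetric closure of G' (Relation.ReflTransGen (fun p q => G' p q ∨ G' q p) a b). -/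
open Matrix Finset
open scoped Classical

variable {V : Type*} [Fintype V] [DecidableEq V]
variable {W : Type*} [Fintype W] [DecidableEq W]

lemma aux_span (G : V → V → Prop) (x : V → ℝ)
    (hker : x ∈ KerD G) (hcok : x ∈ CoKerD G) (S : Set V)
    (hiff : ∀ p q, G p q → (p ∈ S ↔ q ∈ S)) :
    (fun v => if v ∈ S then x v else 0) ∈ KerD G ∩ CoKerD G := by
  constructor
  · show (adjMat G).mulVec _ = 0
    funext p
    simp only [Matrix.mulVec, dotProduct, Pi.zero_apply]
    by_cases hp : p ∈ S
    · have h1 : ∀ q : V, adjMat G p q * (if q ∈ S then x q else 0) = adjMat G p q * x q := by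
        intro q
        by_cases hg : G p q
        · rw [if_pos ((hiff p q hg).mp hp)]
        · simp [adjMat, hg]
      rw [Finset.sum_congr rfl (fun q _ => h1 q)]
      have := congrFun hker p
      simpa [Matrix.mulVec, dotProduct] using this
    · apply Finset.sum_eq_zero
      intro q _
      by_cases hg : G p q
      · rw [if_neg (fun hq => hp ((hiff p q hg).mpr hq))]; ring
      · simp [adjMat, hg]
  · show (adjMat G)ᵀ.mulVec _ = 0
    funext q
    simp only [Matrix.mulVec, dotProduct, Matrix.transpose_apply, Pi.zero_apply]
    by_cases hq : q ∈ S
    · have h1 : ∀ p : V, adjMat G p q * (if p ∈ S then x p else 0) = adjMat G p q * x p := by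
        intro p
        by_cases hg : G p q
        · rw [if_pos ((hiff p q hg).mpr hq)]
        · simp [adjMat, hg]
      rw [Finset.sum_congr rfl (fun p _ => h1 p)]
      have := congrFun hcok q
      simpa [Matrix.mulVec, dotProduct, Matrix.transpose_apply] using this
    · apply Finset.sum_eq_zero
      intro p _
      by_cases hg : G p q
      · rw [if_neg (fun hp => hq ((hiff p q hg).mp hp))]; ring
      · simp [adjMat, hg]

lemma aux_cut (G : V → V → Prop) (x : V → ℝ)
    (hker : x ∈ KerD G) (hcok : x ∈ CoKerD G) (u w : V) (harc : G u w)
    (S : Set V) (huS : u ∈ S) (hwS : w ∉ S)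
    (h1 : ∀ p q, G p q → p ∈ S → q ∉ S → p = u ∧ q = w)
    (h2 : ∀ p q, G p q → q ∈ S → p ∉ S → False) :
    x u * x w = 0 := by
  classical
  set f : V → V → ℝ := fun p q => adjMat G p q * (x p * x q) with hf
  set Sf : Finset V := Finset.univ.filter (fun v => v ∈ S) with hSf
  set Tf : Finset V := Finset.univ.filter (fun v => v ∉ S) with hTf
  have hmemS : ∀ v : V, v ∈ Sf ↔ v ∈ S := by
    intro v; simp [hSf]
  have hmemT : ∀ v : V, v ∈ Tf ↔ v ∉ S := by
    intro v; simp [hTf]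
  -- row sums vanish
  have hrow : ∀ p : V, ∑ q, f p q = 0 := by
    intro p
    have h := congrFun hker p
    simp only [Matrix.mulVec, dotProduct, Pi.zero_apply] at h
    calc ∑ q, f p q = x p * ∑ q, adjMat G p q * x q := by
          rw [Finset.mul_sum]; apply Finset.sum_congr rfl; intro q _; simp [hf]; ring
      _ = 0 := by rw [h, mul_zero]
  have hcol : ∀ q : V, ∑ p, f p q = 0 := by
    intro q
    have h := congrFun hcok q
    simp only [Matrix.mulVec, dotProduct, Matrix.transpose_apply, Pi.zero_apply] at h
    calc ∑ p, f p q = x q * ∑ p, adjMat G p q * x p := by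
          rw [Finset.mul_sum]; apply Finset.sum_congr rfl; intro p _; simp [hf]; ring
      _ = 0 := by rw [h, mul_zero]
  have hsplit : ∀ g : V → ℝ, (∑ v ∈ Sf, g v) + (∑ v ∈ Tf, g v) = ∑ v, g v := by
    intro g
    exact Finset.sum_filter_add_sum_filter_not Finset.univ (fun v => v ∈ S) g
  -- the four partial sums
  have hA1 : ∑ p ∈ Sf, ∑ q, f p q = 0 := Finset.sum_eq_zero (fun p _ => hrow p)
  have hA2 : ∑ q ∈ Sf, ∑ p, f p q = 0 := Finset.sum_eq_zero (fun q _ => hcol q)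
  have hTS : ∑ q ∈ Sf, ∑ p ∈ Tf, f p q = 0 := by
    apply Finset.sum_eq_zero; intro q hq
    apply Finset.sum_eq_zero; intro p hp
    by_cases hg : G p q
    · exact absurd (h2 p q hg ((hmemS q).mp hq) ((hmemT p).mp hp)) not_false
    · simp [hf, adjMat, hg]
  have hST : ∑ p ∈ Sf, ∑ q ∈ Tf, f p q = x u * x w := by
    have hinner : ∀ p ∈ Sf, ∑ q ∈ Tf, f p q = if p = u then x u * x w else 0 := by
      intro p hp
      by_cases hpu : p = u
      · subst hpu
        rw [if_pos rfl]
        have hsingle : ∑ q ∈ Tf, f p q = f p w := by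
          apply Finset.sum_eq_single_of_mem w ((hmemT w).mpr hwS)
          intro q hq hqw
          by_cases hg : G p q
          · exact absurd ((h1 p q hg ((hmemS p).mp hp) ((hmemT q).mp hq)).2) hqw
          · simp [hf, adjMat, hg]
        rw [hsingle]
        simp [hf, adjMat, harc]
      · rw [if_neg hpu]
        apply Finset.sum_eq_zero; intro q hq
        by_cases hg : G p q
        · exact absurd ((h1 p q hg ((hmemS p).mp hp) ((hmemT q).mp hq)).1) hpu
        · simp [hf, adjMat, hg]
    rw [Finset.sum_congr rfl hinner, Finset.sum_ite_eq' Sf u (fun _ => x u * x w),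
      if_pos ((hmemS u).mpr huS)]
  have hSS : ∑ p ∈ Sf, ∑ q ∈ Sf, f p q = ∑ q ∈ Sf, ∑ p ∈ Sf, f p q := Finset.sum_comm
  have e1 : (∑ p ∈ Sf, ∑ q ∈ Sf, f p q) + (x u * x w) = 0 := by
    rw [← hST]
    calc (∑ p ∈ Sf, ∑ q ∈ Sf, f p q) + (∑ p ∈ Sf, ∑ q ∈ Tf, f p q)
        = ∑ p ∈ Sf, ((∑ q ∈ Sf, f p q) + (∑ q ∈ Tf, f p q)) := by
          rw [Finset.sum_add_distrib]
      _ = ∑ p ∈ Sf, ∑ q, f p q := Finset.sum_congr rfl (fun p _ => hsplit _)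
      _ = 0 := hA1
  have e2 : (∑ p ∈ Sf, ∑ q ∈ Sf, f p q) = 0 := by
    have : (∑ q ∈ Sf, ∑ p ∈ Sf, f p q) + (∑ q ∈ Sf, ∑ p ∈ Tf, f p q) = 0 := by
      calc (∑ q ∈ Sf, ∑ p ∈ Sf, f p q) + (∑ q ∈ Sf, ∑ p ∈ Tf, f p q)
          = ∑ q ∈ Sf, ((∑ p ∈ Sf, f p q) + (∑ p ∈ Tf, f p q)) := by
            rw [Finset.sum_add_distrib]
        _ = ∑ q ∈ Sf, ∑ p, f p q := Finset.sum_congr rfl (fun q _ => hsplit _)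
        _ = 0 := hA2
    rw [hTS, add_zero] at this
    rw [hSS, this]
  rw [e2, zero_add] at e1
  exact e1

theorem stmt14 (G : V → V → Prop) (hinter : IsInterNut G) (u w : V)
    (harc : G u w) :
    ∀ a b : V, Relation.ReflTransGen
      (fun p q => (G p q ∧ ¬(p = u ∧ q = w)) ∨ (G q p ∧ ¬(q = u ∧ p = w))) a b := by
  intro a b
  by_contra hab
  obtain ⟨x, hfull, ⟨hker, hcok⟩, hspan⟩ := hinter
  set S : Set V := {v | Relation.ReflTransGen
      (fun p q => (G p q ∧ ¬(p = u ∧ q = w)) ∨ (G q p ∧ ¬(q = u ∧ p = w))) a v} with hSdef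
  have haS : a ∈ S := Relation.ReflTransGen.refl
  have hbS : b ∉ S := hab
  have hstep : ∀ p q, p ∈ S →
      ((G p q ∧ ¬(p = u ∧ q = w)) ∨ (G q p ∧ ¬(q = u ∧ p = w))) → q ∈ S :=
    fun p q hp h => Relation.ReflTransGen.tail hp h
  have hcross1 : ∀ p q, G p q → p ∈ S → q ∉ S → p = u ∧ q = w := by
    intro p q hpq hp hq
    by_contra hne
    exact hq (hstep p q hp (Or.inl ⟨hpq, hne⟩))
  have hcross2 : ∀ p q, G p q → q ∈ S → p ∉ S → p = u ∧ q = w := by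
    intro p q hpq hq hp
    by_contra hne
    exact hp (hstep q p hq (Or.inr ⟨hpq, hne⟩))
  by_cases huS : u ∈ S <;> by_cases hwS : w ∈ S
  -- case u ∈ S, w ∈ S : S is closed, use spanning
  · have hiff : ∀ p q, G p q → (p ∈ S ↔ q ∈ S) := by
      intro p q hpq
      constructor
      · intro hp; by_contra hq
        exact hq ((hcross1 p q hpq hp hq).2 ▸ hwS)
      · intro hq; by_contra hp
        exact hp ((hcross2 p q hpq hq hp).1 ▸ huS)
    obtain ⟨c, hc⟩ := hspan _ (aux_span G x hker hcok S hiff)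
    have hca := congrFun hc a
    have hcb := congrFun hc b
    simp only [if_pos haS, if_neg hbS, Pi.smul_apply, smul_eq_mul] at hca hcb
    have hc1 : c = 1 := by
      have := hca
      field_simp at this
      rcases mul_eq_mul_right_iff.mp (by linarith [this] : c * x a = 1 * x a) with h | h
      · exact h
      · exact absurd h (hfull a)
    rw [hc1, one_mul] at hcb
    exact hfull b hcb.symm
  -- case u ∈ S, w ∉ S : cut sum argument
  · have h2 : ∀ p q, G p q → q ∈ S → p ∉ S → False := by
      intro p q hpq hq hp
      exact hp ((hcross2 p q hpq hq hp).1 ▸ huS)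
    have := aux_cut G x hker hcok u w harc S huS hwS hcross1 h2
    exact absurd this (mul_ne_zero (hfull u) (hfull w))
  -- case u ∉ S, w ∈ S : cut sum argument on complement
  · have h1' : ∀ p q, G p q → p ∈ Sᶜ → q ∉ Sᶜ → p = u ∧ q = w := by
      intro p q hpq hp hq
      exact hcross2 p q hpq (not_not.mp hq) hp
    have h2' : ∀ p q, G p q → q ∈ Sᶜ → p ∉ Sᶜ → False := by
      intro p q hpq hq hp
      exact hq ((hcross1 p q hpq (not_not.mp hp) hq).2 ▸ hwS)
    have := aux_cut G x hker hcok u w harc Sᶜ huS (not_not.mpr hwS) h1' h2'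
    exact absurd this (mul_ne_zero (hfull u) (hfull w))
  -- case u ∉ S, w ∉ S : S is closed, use spanning
  · have hiff : ∀ p q, G p q → (p ∈ S ↔ q ∈ S) := by
      intro p q hpq
      constructor
      · intro hp; by_contra hq
        exact huS ((hcross1 p q hpq hp hq).1 ▸ hp)
      · intro hq; by_contra hp
        exact hwS ((hcross2 p q hpq hq hp).2 ▸ hq)
    obtain ⟨c, hc⟩ := hspan _ (aux_span G x hker hcok S hiff)
    have hca := congrFun hc a
    have hcb := congrFun hc b
    simp only [if_pos haS, if_neg hbS, Pi.smul_apply, smul_eq_mul] at hca hcb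
    have hc1 : c = 1 := by
      rcases mul_eq_mul_right_iff.mp (by linarith [hca] : c * x a = 1 * x a) with h | h
      · exact h
      · exact absurd h (hfull a)
    rw [hc1, one_mul] at hcb
    exact hfull b hcb.symm
end

section
/- Every connected k-diregular digraph is strongly connected: let G be a digraph on a finite vertex type V such that every vertex has out-degree k and in-degree k, and suppose the underlying graph is connected (for all a, b ∈ V there is a walk from a to b in the symmetric closure of G). Then for all u, v ∈ V there is a directed walk from u to v, i.e. Relation.ReflTransGen G u v. -/
open Matrix Finset
open scoped Classical

variable {V : Type*} [Fintype V] [DecidableEq V]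
variable {W : Type*} [Fintype W] [DecidableEq W]

theorem stmt19 (G : V → V → Prop) (k : ℕ)
    (hreg : ∀ v : V, {u | G v u}.ncard = k ∧ {u | G u v}.ncard = k)
    (hconn : ∀ a b : V, Relation.ReflTransGen (fun p q => G p q ∨ G q p) a b) :
    ∀ u v : V, Relation.ReflTransGen G u v := by
  intro u v
  set S : Finset V := univ.filter (fun w => Relation.ReflTransGen G u w) with hS
  have hmem : ∀ w, w ∈ S ↔ Relation.ReflTransGen G u w := by
    intro w; simp [hS]
  have hfwd : ∀ w ∈ S, ∀ x, G w x → x ∈ S := by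
    intro w hw x hwx
    exact (hmem x).2 (((hmem w).1 hw).tail hwx)
  have hout : ∀ w, (univ.filter (fun x => G w x)).card = k := by
    intro w
    have := (hreg w).1
    rwa [Set.ncard_eq_toFinset_card', Set.toFinset_setOf] at this
  have hin : ∀ w, (univ.filter (fun y => G y w)).card = k := by
    intro w
    have := (hreg w).2
    rwa [Set.ncard_eq_toFinset_card', Set.toFinset_setOf] at this
  -- arcs within S from out-degrees
  have houtS : ∀ w ∈ S, (S.filter (fun x => G w x)).card = k := by
    intro w hw
    rw [← hout w]
    congr 1
    ext x
    simp only [mem_filter, mem_univ, true_and]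
    exact ⟨fun h => h.2, fun h => ⟨hfwd w hw x h, h⟩⟩
  have hdouble : ∑ w ∈ S, (S.filter (fun y => G y w)).card
      = ∑ y ∈ S, (S.filter (fun x => G y x)).card := by
    simp only [Finset.card_filter]
    exact Finset.sum_comm
  have hsum1 : ∑ w ∈ S, (S.filter (fun y => G y w)).card = k * S.card := by
    rw [hdouble, Finset.sum_congr rfl houtS, Finset.sum_const, smul_eq_mul, mul_comm]
  have hsum2 : ∑ w ∈ S, (univ.filter (fun y => G y w)).card = k * S.card := by
    rw [Finset.sum_congr rfl (fun w _ => hin w), Finset.sum_const, smul_eq_mul, mul_comm]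
  have hle : ∀ w ∈ S, (S.filter (fun y => G y w)).card ≤ (univ.filter (fun y => G y w)).card :=
    fun w _ => Finset.card_le_card (Finset.filter_subset_filter _ (Finset.subset_univ S))
  have heq : ∀ w ∈ S, (S.filter (fun y => G y w)).card = (univ.filter (fun y => G y w)).card := by
    have := (Finset.sum_eq_sum_iff_of_le hle).1 (hsum1.trans hsum2.symm)
    exact this
  have hbwd : ∀ w ∈ S, ∀ y, G y w → y ∈ S := by
    intro w hw y hyw
    have hsub : (S.filter (fun y => G y w)) = (univ.filter (fun y => G y w)) :=
      Finset.eq_of_subset_of_card_le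
        (Finset.filter_subset_filter _ (Finset.subset_univ S)) (heq w hw).ge
    have : y ∈ S.filter (fun y => G y w) := by
      rw [hsub]; simp [hyw]
    exact (Finset.mem_filter.1 this).1
  -- now use connectivity
  have hv : v ∈ S := by
    have h := hconn u v
    induction h with
    | refl => exact (hmem u).2 Relation.ReflTransGen.refl
    | tail _ step ih =>
      rcases step with h1 | h2
      · exact hfwd _ ih _ h1
      · exact hbwd _ ih _ h2
  exact (hmem v).1 hv
end
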